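/- arXiv:2110.05608 — 7 statements merged into one kernel-verified Lean document; each statement's English description precedes it below -/
import Mathlib

section
/- In the platform-choice game, the fully segregated state ω_ml in which all Group A agents are on platform ℓ and all Group B agents are on platform m is a strict Nash equilibrium: a Group A agent who unilaterally moves to platform m receives payoff −δ·N^B, which is strictly less than her current payoff (N^A−1)·(1−γ_A), and a Group B agent who unilaterally moves to platform ℓ receives payoff −δ·N^A, which is strictly less than his current payoff (N^B−1)·γ_B. -/
/-- Utility of a Group A agent on platform m at state (nAm, nBm). -/
noncomputable def UAm (γA δ nAm nBm : ℝ) : ℝ := (nAm - 1) * γA - nBm * δ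

/-- Utility of a Group A agent on platform ℓ at state (nAm, nBm). -/
noncomputable def UAl (NA NB γA δ nAm nBm : ℝ) : ℝ :=
  (NA - nAm - 1) * (1 - γA) - (NB - nBm) * δ

/-- Utility of a Group B agent on platform m at state (nAm, nBm). -/
noncomputable def UBm (γB δ nAm nBm : ℝ) : ℝ := -nAm * δ + (nBm - 1) * γB

/-- Utility of a Group B agent on platform ℓ at state (nAm, nBm). -/
noncomputable def UBl (NA NB γB δ nAm nBm : ℝ) : ℝ :=
  -(NA - nAm) * δ + (NB - nBm - 1) * (1 - γB)

/-!
At ω_ml each agent shares her platform only with her own group, so her payoff is a nonnegative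
conformity term. A deviator instead lands alone among the other group: she loses the whole
conformity term and pays δ for each of the N agents of the other group, a strictly negative payoff.
-/

theorem UAm_one (γA δ nBm : ℝ) : UAm γA δ 1 nBm = -δ * nBm := by
  unfold UAm; ring

theorem UAl_zero_of_all_B_on_m (NA NB γA δ : ℝ) :
    UAl NA NB γA δ 0 NB = (NA - 1) * (1 - γA) := by
  unfold UAl; ring

theorem UBm_zero (γB δ nBm : ℝ) : UBm γB δ 0 nBm = (nBm - 1) * γB := by
  unfold UBm; ring

theorem UBl_zero_of_one_B_on_ℓ (NA NB γB δ : ℝ) :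
    UBl NA NB γB δ 0 (NB - 1) = -δ * NA := by
  unfold UBl; ring

theorem neg_mul_lt_sub_one_mul {δ x k c : ℝ} (hδ : 0 < δ) (hx : 0 < x) (hk : 1 ≤ k)
    (hc : 0 ≤ c) : -δ * x < (k - 1) * c := by
  have hloss : 0 < δ * x := mul_pos hδ hx
  have hgain : 0 ≤ (k - 1) * c := mul_nonneg (sub_nonneg.mpr hk) hc
  linarith

/-- The fully segregated state ω_ml = (0, N^B) (all of Group A on ℓ, all of
Group B on m) is a strict Nash equilibrium: a Group A deviator to m (evaluated
at the post-deviation state (1, N^B)) gets −δ·N^B < (N^A − 1)·(1 − γ_A), and a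
Group B deviator to ℓ (evaluated at the post-deviation state (0, N^B − 1)) gets
−δ·N^A < (N^B − 1)·γ_B. -/
theorem omega_ml_strict_equilibrium
    (NA NB : ℕ) (hNA : 2 ≤ NA) (hNB : 2 ≤ NB)
    (γA γB δ : ℝ) (hγA : γA ∈ Set.Ioo (1/2 : ℝ) 1) (hγB : γB ∈ Set.Ioo (1/2 : ℝ) 1)
    (hδ : 0 < δ) :
    (UAm γA δ 1 NB < UAl NA NB γA δ 0 NB ∧
      UAm γA δ 1 NB = -δ * NB ∧
      UAl NA NB γA δ 0 NB = ((NA : ℝ) - 1) * (1 - γA)) ∧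
    (UBl NA NB γB δ 0 (NB - 1 : ℕ) < UBm γB δ 0 NB ∧
      UBl NA NB γB δ 0 (NB - 1 : ℕ) = -δ * NA ∧
      UBm γB δ 0 NB = ((NB : ℝ) - 1) * γB) := by
  have hNA1 : (1 : ℝ) ≤ NA := by exact_mod_cast (by omega : 1 ≤ NA)
  have hNB1 : (1 : ℝ) ≤ NB := by exact_mod_cast (by omega : 1 ≤ NB)
  have hB_dev : UBl NA NB γB δ 0 (NB - 1 : ℕ) = -δ * NA := by
    rw [Nat.cast_pred (by omega), UBl_zero_of_one_B_on_ℓ]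
  refine ⟨⟨?_, UAm_one .., UAl_zero_of_all_B_on_m ..⟩, ⟨?_, hB_dev, UBm_zero ..⟩⟩
  · rw [UAm_one, UAl_zero_of_all_B_on_m]
    exact neg_mul_lt_sub_one_mul hδ (by linarith) hNA1 (sub_nonneg.mpr hγA.2.le)
  · rw [hB_dev, UBm_zero]
    exact neg_mul_lt_sub_one_mul hδ (by linarith) hNB1 (by linarith [hγB.1])
end

section
/- In the platform-choice game, the fully integrated state ω_ll = (N^A, N^B), in which every agent is on platform m, is a Nash equilibrium (no agent strictly gains by unilaterally moving to platform ℓ, where the deviator's payoff is evaluated at the post-deviation state) if and only if γ_A ≥ (N^B/(N^A − 1))·δ and γ_B ≥ (N^A/(N^B − 1))·δ. -/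
/-! A lone deviator to ℓ from the integrated state meets nobody there, so its payoff is `0`;
staying on m pays `(n - 1) γ - k δ` with `n` own-group and `k` other-group peers. Hence staying
is a best response exactly when `γ ≥ k / (n - 1) · δ`, for either group. -/

theorem UAl_deviation_eq_zero (NA NB γA δ : ℝ) : UAl NA NB γA δ (NA - 1) NB = 0 := by
  simp [UAl]

theorem UBl_deviation_eq_zero (NA NB γB δ : ℝ) : UBl NA NB γB δ NA (NB - 1) = 0 := by
  simp [UBl]

theorem div_mul_le_iff_sub_mul_nonneg {n k γ δ : ℝ} (hn : 1 < n) :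
    k / (n - 1) * δ ≤ γ ↔ 0 ≤ (n - 1) * γ - k * δ := by
  rw [div_mul_eq_mul_div, div_le_iff₀ (sub_pos.mpr hn), sub_nonneg, mul_comm γ]

theorem UAl_deviation_le_UAm_iff {NA NB γA δ : ℝ} (hNA : 1 < NA) :
    UAl NA NB γA δ (NA - 1) NB ≤ UAm γA δ NA NB ↔ γA ≥ NB / (NA - 1) * δ := by
  rw [UAl_deviation_eq_zero, ge_iff_le, div_mul_le_iff_sub_mul_nonneg hNA, UAm]

theorem UBl_deviation_le_UBm_iff {NA NB γB δ : ℝ} (hNB : 1 < NB) :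
    UBl NA NB γB δ NA (NB - 1) ≤ UBm γB δ NA NB ↔ γB ≥ NA / (NB - 1) * δ := by
  rw [UBl_deviation_eq_zero, ge_iff_le, div_mul_le_iff_sub_mul_nonneg hNB, UBm, neg_mul,
    neg_add_eq_sub]

theorem omega_ll_equilibrium_iff_general
    (NA NB : ℕ) (hNA : 2 ≤ NA) (hNB : 2 ≤ NB)
    (γA γB δ : ℝ) :
    (UAl NA NB γA δ (NA - 1 : ℕ) NB ≤ UAm γA δ NA NB ∧
      UBl NA NB γB δ NA (NB - 1 : ℕ) ≤ UBm γB δ NA NB) ↔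
    (γA ≥ ((NB : ℝ) / ((NA : ℝ) - 1)) * δ ∧ γB ≥ ((NA : ℝ) / ((NB : ℝ) - 1)) * δ) := by
  have hNA' : (1 : ℝ) < NA := by exact_mod_cast hNA
  have hNB' : (1 : ℝ) < NB := by exact_mod_cast hNB
  rw [Nat.cast_pred (by omega), Nat.cast_pred (by omega)]
  exact and_congr (UAl_deviation_le_UAm_iff hNA') (UBl_deviation_le_UBm_iff hNB')

/-- The fully integrated state ω_ll = (N^A, N^B) (everyone on m) is a Nash
equilibrium (no agent strictly gains by unilaterally moving to ℓ, the
deviator's payoff evaluated at the post-deviation state) if and only if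
γ_A ≥ (N^B/(N^A − 1))·δ and γ_B ≥ (N^A/(N^B − 1))·δ. -/
theorem omega_ll_equilibrium_iff
    (NA NB : ℕ) (hNA : 2 ≤ NA) (hNB : 2 ≤ NB)
    (γA γB δ : ℝ) (hγA : γA ∈ Set.Ioo (1/2 : ℝ) 1) (hγB : γB ∈ Set.Ioo (1/2 : ℝ) 1)
    (hδ : 0 < δ) :
    (UAl NA NB γA δ (NA - 1 : ℕ) NB ≤ UAm γA δ NA NB ∧
      UBl NA NB γB δ NA (NB - 1 : ℕ) ≤ UBm γB δ NA NB) ↔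
    (γA ≥ ((NB : ℝ) / ((NA : ℝ) - 1)) * δ ∧ γB ≥ ((NA : ℝ) / ((NB : ℝ) - 1)) * δ) :=
  omega_ll_equilibrium_iff_general NA NB hNA hNB γA γB δ
end

section
/- In the platform-choice game, the fully integrated state ω_mm = (0, 0), in which every agent is on platform ℓ, is a Nash equilibrium (no agent strictly gains by unilaterally moving to platform m, where the deviator's payoff is evaluated at the post-deviation state) if and only if 1 − γ_A ≥ (N^B/(N^A − 1))·δ and 1 − γ_B ≥ (N^A/(N^B − 1))·δ. -/
theorem UAm_one_zero_le_UAl_zero_zero_iff {NA : ℝ} (hNA : 1 < NA) (NB γA δ : ℝ) :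
    UAm γA δ 1 0 ≤ UAl NA NB γA δ 0 0 ↔ NB / (NA - 1) * δ ≤ 1 - γA := by
  rw [div_mul_eq_mul_div, div_le_iff₀ (sub_pos.mpr hNA), UAm, UAl]
  constructor <;> intro h <;> linarith

theorem UBm_zero_one_le_UBl_zero_zero_iff {NB : ℝ} (hNB : 1 < NB) (NA γB δ : ℝ) :
    UBm γB δ 0 1 ≤ UBl NA NB γB δ 0 0 ↔ NA / (NB - 1) * δ ≤ 1 - γB := by
  rw [div_mul_eq_mul_div, div_le_iff₀ (sub_pos.mpr hNB), UBm, UBl]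
  constructor <;> intro h <;> linarith

theorem omega_mm_equilibrium_iff_general
    (NA NB : ℕ) (hNA : 2 ≤ NA) (hNB : 2 ≤ NB)
    (γA γB δ : ℝ) :
    (UAm γA δ 1 0 ≤ UAl NA NB γA δ 0 0 ∧
      UBm γB δ 0 1 ≤ UBl NA NB γB δ 0 0) ↔
    (1 - γA ≥ ((NB : ℝ) / ((NA : ℝ) - 1)) * δ ∧
      1 - γB ≥ ((NA : ℝ) / ((NB : ℝ) - 1)) * δ) :=
  and_congr (UAm_one_zero_le_UAl_zero_zero_iff (by exact_mod_cast hNA) _ _ _)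
    (UBm_zero_one_le_UBl_zero_zero_iff (by exact_mod_cast hNB) _ _ _)

/-- The fully integrated state ω_mm = (0, 0) (everyone on ℓ) is a Nash
equilibrium (no agent strictly gains by unilaterally moving to m, the
deviator's payoff evaluated at the post-deviation state) if and only if
1 − γ_A ≥ (N^B/(N^A − 1))·δ and 1 − γ_B ≥ (N^A/(N^B − 1))·δ. -/
theorem omega_mm_equilibrium_iff
    (NA NB : ℕ) (hNA : 2 ≤ NA) (hNB : 2 ≤ NB)
    (γA γB δ : ℝ) (hγA : γA ∈ Set.Ioo (1/2 : ℝ) 1) (hγB : γB ∈ Set.Ioo (1/2 : ℝ) 1)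
    (hδ : 0 < δ) :
    (UAm γA δ 1 0 ≤ UAl NA NB γA δ 0 0 ∧
      UBm γB δ 0 1 ≤ UBl NA NB γB δ 0 0) ↔
    (1 - γA ≥ ((NB : ℝ) / ((NA : ℝ) - 1)) * δ ∧
      1 - γB ≥ ((NA : ℝ) / ((NB : ℝ) - 1)) * δ) :=
  omega_mm_equilibrium_iff_general NA NB hNA hNB γA γB δ
end

section
/- The platform-choice game is an exact potential game with potential function ρ(n_Am, n_Bm) = γ_A·C(n_Am, 2) + (1 − γ_A)·C(N^A − n_Am, 2) + γ_B·C(n_Bm, 2) + (1 − γ_B)·C(N^B − n_Bm, 2) − δ·(n_Am·n_Bm + (N^A − n_Am)(N^B − n_Bm)), where C(n, 2) = n(n−1)/2. Namely: (i) for any state (n_Am, n_Bm) with n_Am < N^A, ρ(n_Am + 1, n_Bm) − ρ(n_Am, n_Bm) = U^A(m; (n_Am + 1, n_Bm)) − U^A(ℓ; (n_Am, n_Bm)), i.e. the potential change from a Group A agent moving from ℓ to m equals that agent's utility change; and (ii) for any state (n_Am, n_Bm) with n_Bm < N^B, ρ(n_Am, n_Bm + 1) − ρ(n_Am, n_Bm)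 = U^B(m; (n_Am, n_Bm + 1)) − U^B(ℓ; (n_Am, n_Bm)). -/
/-- C(n, 2) = n(n−1)/2, extended to real arguments. -/
noncomputable def C2 (n : ℝ) : ℝ := n * (n - 1) / 2

/-- The potential function of the platform-choice game. -/
noncomputable def pot (NA NB γA γB δ nAm nBm : ℝ) : ℝ :=
  γA * C2 nAm + (1 - γA) * C2 (NA - nAm) + γB * C2 nBm + (1 - γB) * C2 (NB - nBm)
    - δ * (nAm * nBm + (NA - nAm) * (NB - nBm))

/-!
`C2 (n + 1) - C2 n = n`, so moving one Group A agent from ℓ to m raises the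
m-term of the potential by `γA * nAm`, lowers the ℓ-term by `(1 - γA) * (NA - nAm - 1)` and
changes the cross-group term by `δ * (NB - 2 * nBm)`; these are exactly the three pieces of
`UAm - UAl`. The potential and the utilities are symmetric under exchanging the two groups,
so the Group B identity is the Group A one for the swapped game.
-/

theorem C2_add_one_sub_C2 (n : ℝ) : C2 (n + 1) - C2 n = n := by
  unfold C2
  ring

theorem C2_sub_C2_sub_one (n : ℝ) : C2 n - C2 (n - 1) = n - 1 := by
  simpa using C2_add_one_sub_C2 (n - 1)

theorem pot_swap (NA NB γA γB δ x y : ℝ) :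
    pot NA NB γA γB δ x y = pot NB NA γB γA δ y x := by
  unfold pot
  ring

theorem UBm_eq_UAm (γB δ x y : ℝ) : UBm γB δ x y = UAm γB δ y x := by
  unfold UBm UAm
  ring

theorem UBl_eq_UAl (NA NB γB δ x y : ℝ) : UBl NA NB γB δ x y = UAl NB NA γB δ y x := by
  unfold UBl UAl
  ring

theorem pot_add_one_left_sub (NA NB γA γB δ x y : ℝ) :
    pot NA NB γA γB δ (x + 1) y - pot NA NB γA γB δ x y =
      UAm γA δ (x + 1) y - UAl NA NB γA δ x y := by
  have hm := C2_add_one_sub_C2 x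
  have hl := C2_sub_C2_sub_one (NA - x)
  rw [sub_sub] at hl
  unfold pot UAm UAl
  linear_combination γA * hm - (1 - γA) * hl

theorem pot_add_one_right_sub (NA NB γA γB δ x y : ℝ) :
    pot NA NB γA γB δ x (y + 1) - pot NA NB γA γB δ x y =
      UBm γB δ x (y + 1) - UBl NA NB γB δ x y := by
  simpa only [pot_swap NA NB, UBm_eq_UAm, UBl_eq_UAl] using
    pot_add_one_left_sub NB NA γB γA δ y x

theorem exact_potential_game_general
    (NA NB : ℕ)
    (γA γB δ : ℝ) :
    (∀ nAm nBm : ℕ, nAm < NA → nBm ≤ NB →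
      pot NA NB γA γB δ (nAm + 1 : ℕ) nBm - pot NA NB γA γB δ nAm nBm =
        UAm γA δ (nAm + 1 : ℕ) nBm - UAl NA NB γA δ nAm nBm) ∧
    (∀ nAm nBm : ℕ, nAm ≤ NA → nBm < NB →
      pot NA NB γA γB δ nAm (nBm + 1 : ℕ) - pot NA NB γA γB δ nAm nBm =
        UBm γB δ nAm (nBm + 1 : ℕ) - UBl NA NB γB δ nAm nBm) := by
  refine ⟨fun nAm nBm _ _ => ?_, fun nAm nBm _ _ => ?_⟩
  · push_cast
    exact pot_add_one_left_sub _ _ _ _ _ _ _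
  · push_cast
    exact pot_add_one_right_sub _ _ _ _ _ _ _

/-- The platform-choice game is an exact potential game with potential `pot`:
the change in the potential from a single agent switching from ℓ to m equals
that agent's utility change. -/
theorem exact_potential_game
    (NA NB : ℕ) (hNA : 2 ≤ NA) (hNB : 2 ≤ NB)
    (γA γB δ : ℝ) (hγA : γA ∈ Set.Ioo (1/2 : ℝ) 1) (hγB : γB ∈ Set.Ioo (1/2 : ℝ) 1)
    (hδ : 0 < δ) :
    (∀ nAm nBm : ℕ, nAm < NA → nBm ≤ NB →
      pot NA NB γA γB δ (nAm + 1 : ℕ) nBm - pot NA NB γA γB δ nAm nBm =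
        UAm γA δ (nAm + 1 : ℕ) nBm - UAl NA NB γA δ nAm nBm) ∧
    (∀ nAm nBm : ℕ, nAm ≤ NA → nBm < NB →
      pot NA NB γA γB δ nAm (nBm + 1 : ℕ) - pot NA NB γA γB δ nAm nBm =
        UBm γB δ nAm (nBm + 1 : ℕ) - UBl NA NB γB δ nAm nBm) :=
  exact_potential_game_general NA NB γA γB δ
end

section
/- The state ω_ll (full integration on platform m) maximizes the potential over the four group-symmetric states {ω_ll, ω_lm, ω_ml, ω_mm} — i.e. is stochastically stable — if and only if γ_A ≥ (N^B/(N^A − 1))·δ + 1/2 and γ_B ≥ (N^A/(N^B − 1))·δ + 1/2. -/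
/-- Potential at the integrated state ω_ll (everyone on m). -/
noncomputable def potLL (NA NB γA γB : ℝ) : ℝ := C2 NA * γA + C2 NB * γB

/-- Potential at the segregated state ω_lm (Group A on m, Group B on ℓ). -/
noncomputable def potLM (NA NB γA γB δ : ℝ) : ℝ :=
  C2 NA * γA + NA * NB * δ + C2 NB * (1 - γB)

/-- Potential at the segregated state ω_ml (Group A on ℓ, Group B on m). -/
noncomputable def potML (NA NB γA γB δ : ℝ) : ℝ :=
  C2 NA * (1 - γA) + NA * NB * δ + C2 NB * γB

/-- Potential at the integrated state ω_mm (everyone on ℓ). -/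
noncomputable def potMM (NA NB γA γB : ℝ) : ℝ := C2 NA * (1 - γA) + C2 NB * (1 - γB)

section Potential

variable (NA NB γA γB δ : ℝ)

theorem potLL_sub_potLM :
    potLL NA NB γA γB - potLM NA NB γA γB δ = NB * ((NB - 1) * (γB - 1 / 2) - NA * δ) := by
  unfold potLL potLM C2
  ring

theorem potLL_sub_potML :
    potLL NA NB γA γB - potML NA NB γA γB δ = NA * ((NA - 1) * (γA - 1 / 2) - NB * δ) := by
  unfold potLL potML C2
  ring

theorem potLL_sub_potMM :
    potLL NA NB γA γB - potMM NA NB γA γB =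
      (potLL NA NB γA γB - potLM NA NB γA γB δ) + (potLL NA NB γA γB - potML NA NB γA γB δ) +
        2 * NA * NB * δ := by
  unfold potLL potLM potML potMM
  ring

end Potential

theorem div_mul_add_half_le_iff {n m γ δ : ℝ} (hn : 1 < n) :
    m / (n - 1) * δ + 1 / 2 ≤ γ ↔ m * δ ≤ (n - 1) * (γ - 1 / 2) := by
  rw [div_mul_eq_mul_div, ← le_sub_iff_add_le, div_le_iff₀ (sub_pos.2 hn), mul_comm (γ - 1 / 2)]

theorem potLM_le_potLL_iff {NA NB : ℝ} (γA γB δ : ℝ) (hNB : 1 < NB) :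
    potLM NA NB γA γB δ ≤ potLL NA NB γA γB ↔ NA / (NB - 1) * δ + 1 / 2 ≤ γB := by
  rw [div_mul_add_half_le_iff hNB, ← sub_nonneg, potLL_sub_potLM,
    mul_nonneg_iff_of_pos_left (by linarith), sub_nonneg]

theorem potML_le_potLL_iff {NA NB : ℝ} (γA γB δ : ℝ) (hNA : 1 < NA) :
    potML NA NB γA γB δ ≤ potLL NA NB γA γB ↔ NB / (NA - 1) * δ + 1 / 2 ≤ γA := by
  rw [div_mul_add_half_le_iff hNA, ← sub_nonneg, potLL_sub_potML,
    mul_nonneg_iff_of_pos_left (by linarith), sub_nonneg]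

theorem potMM_le_potLL_of_le_of_le {NA NB γA γB δ : ℝ} (hNA : 0 ≤ NA) (hNB : 0 ≤ NB)
    (hδ : 0 ≤ δ) (hLM : potLM NA NB γA γB δ ≤ potLL NA NB γA γB)
    (hML : potML NA NB γA γB δ ≤ potLL NA NB γA γB) :
    potMM NA NB γA γB ≤ potLL NA NB γA γB := by
  have hcross : 0 ≤ 2 * NA * NB * δ := by positivity
  rw [← sub_nonneg, potLL_sub_potMM NA NB γA γB δ]
  linarith

theorem omega_ll_stochastically_stable_iff_general
    (NA NB : ℕ) (hNA : 2 ≤ NA) (hNB : 2 ≤ NB)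
    (γA γB δ : ℝ)
    (hδ : 0 < δ) :
    (potLL NA NB γA γB ≥ potLM NA NB γA γB δ ∧
      potLL NA NB γA γB ≥ potML NA NB γA γB δ ∧
      potLL NA NB γA γB ≥ potMM NA NB γA γB) ↔
    (γA ≥ ((NB : ℝ) / ((NA : ℝ) - 1)) * δ + 1/2 ∧
      γB ≥ ((NA : ℝ) / ((NB : ℝ) - 1)) * δ + 1/2) := by
  have hA : (1 : ℝ) < NA := by exact_mod_cast hNA
  have hB : (1 : ℝ) < NB := by exact_mod_cast hNB
  constructor
  · rintro ⟨hLM, hML, -⟩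
    exact ⟨(potML_le_potLL_iff γA γB δ hA).1 hML, (potLM_le_potLL_iff γA γB δ hB).1 hLM⟩
  · rintro ⟨hγA, hγB⟩
    have hLM := (potLM_le_potLL_iff γA γB δ hB).2 hγB
    have hML := (potML_le_potLL_iff γA γB δ hA).2 hγA
    exact ⟨hLM, hML, potMM_le_potLL_of_le_of_le (by positivity) (by positivity) hδ.le hLM hML⟩

/-- The integrated state ω_ll is stochastically stable (maximizes the potential
over the four group-symmetric states) if and only if
γ_A ≥ (N^B/(N^A − 1))·δ + 1/2 and γ_B ≥ (N^A/(N^B − 1))·δ + 1/2. -/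
theorem omega_ll_stochastically_stable_iff
    (NA NB : ℕ) (hNA : 2 ≤ NA) (hNB : 2 ≤ NB)
    (γA γB δ : ℝ) (hγA : γA ∈ Set.Ioo (1/2 : ℝ) 1) (hγB : γB ∈ Set.Ioo (1/2 : ℝ) 1)
    (hδ : 0 < δ) :
    (potLL NA NB γA γB ≥ potLM NA NB γA γB δ ∧
      potLL NA NB γA γB ≥ potML NA NB γA γB δ ∧
      potLL NA NB γA γB ≥ potMM NA NB γA γB) ↔
    (γA ≥ ((NB : ℝ) / ((NA : ℝ) - 1)) * δ + 1/2 ∧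
      γB ≥ ((NA : ℝ) / ((NB : ℝ) - 1)) * δ + 1/2) :=
  omega_ll_stochastically_stable_iff_general NA NB hNA hNB γA γB δ hδ
end

section
/- The segregated state ω_lm (all of Group A on platform m, all of Group B on platform ℓ) maximizes the potential over the four group-symmetric states {ω_ll, ω_lm, ω_ml, ω_mm} — i.e. is stochastically stable — if and only if C(N^A,2)·(2γ_A − 1) ≥ C(N^B,2)·(2γ_B − 1) and γ_B ≤ (N^A/(N^B − 1))·δ + 1/2. -/
/-! Writing `y = C(N^B,2)·(2γ_B − 1) ≥ 0`, ω_lm beats ω_ll iff `y ≤ N^A N^B δ`, which is the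
second condition rescaled by `N^B/2`, and beats ω_ml iff the first condition holds. Beating ω_mm
comes for free, since `ρ*(ω_ll) + ρ*(ω_ml) = ρ*(ω_lm) + ρ*(ω_mm) + 2y`. -/

lemma C2_natCast_nonneg (n : ℕ) : 0 ≤ C2 n := by
  rcases n with _ | n
  · simp [C2]
  · simp only [C2, Nat.cast_succ, add_sub_cancel_right]
    positivity

lemma C2_mul_le_iff {n m γ δ : ℝ} (hn : 1 < n) :
    C2 n * (2 * γ - 1) ≤ m * n * δ ↔ γ ≤ m / (n - 1) * δ + 1 / 2 := by
  have hC2 : C2 n * (2 * γ - 1) = n * ((γ - 1 / 2) * (n - 1)) := by unfold C2; ring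
  rw [hC2, mul_comm m, mul_assoc, mul_le_mul_iff_right₀ (by linarith), div_mul_eq_mul_div,
    ← sub_le_iff_le_add, le_div_iff₀ (sub_pos.mpr hn)]

section Potentials

variable (NA NB γA γB δ : ℝ)

lemma potLM_sub_potLL :
    potLM NA NB γA γB δ - potLL NA NB γA γB = NA * NB * δ - C2 NB * (2 * γB - 1) := by
  unfold potLM potLL; ring

lemma potLM_sub_potML :
    potLM NA NB γA γB δ - potML NA NB γA γB δ = C2 NA * (2 * γA - 1) - C2 NB * (2 * γB - 1) := by
  unfold potLM potML; ring

lemma potLL_add_potML :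
    potLL NA NB γA γB + potML NA NB γA γB δ =
      potLM NA NB γA γB δ + potMM NA NB γA γB + 2 * (C2 NB * (2 * γB - 1)) := by
  unfold potLL potML potLM potMM; ring

variable {NA NB γA γB δ}

lemma potMM_le_potLM (hy : 0 ≤ C2 NB * (2 * γB - 1))
    (hLL : potLL NA NB γA γB ≤ potLM NA NB γA γB δ)
    (hML : potML NA NB γA γB δ ≤ potLM NA NB γA γB δ) :
    potMM NA NB γA γB ≤ potLM NA NB γA γB δ := by
  linarith [potLL_add_potML NA NB γA γB δ]

end Potentials

theorem omega_lm_stochastically_stable_iff_general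
    (NA NB : ℕ) (hNB : 2 ≤ NB)
    (γA γB δ : ℝ) (hγB : γB ∈ Set.Ioo (1/2 : ℝ) 1) :
    (potLM NA NB γA γB δ ≥ potLL NA NB γA γB ∧
      potLM NA NB γA γB δ ≥ potML NA NB γA γB δ ∧
      potLM NA NB γA γB δ ≥ potMM NA NB γA γB) ↔
    (C2 NA * (2 * γA - 1) ≥ C2 NB * (2 * γB - 1) ∧
      γB ≤ ((NA : ℝ) / ((NB : ℝ) - 1)) * δ + 1/2) := by
  have hy : 0 ≤ C2 NB * (2 * γB - 1) :=
    mul_nonneg (C2_natCast_nonneg NB) (by linarith [hγB.1])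
  rw [← C2_mul_le_iff (by exact_mod_cast hNB : (1 : ℝ) < NB)]
  have gap_LL := potLM_sub_potLL NA NB γA γB δ
  have gap_ML := potLM_sub_potML NA NB γA γB δ
  constructor
  · rintro ⟨beats_LL, beats_ML, -⟩
    constructor <;> linarith
  · rintro ⟨hA, hB⟩
    have beats_LL : potLL NA NB γA γB ≤ potLM NA NB γA γB δ := by linarith
    have beats_ML : potML NA NB γA γB δ ≤ potLM NA NB γA γB δ := by linarith
    exact ⟨beats_LL, beats_ML, potMM_le_potLM hy beats_LL beats_ML⟩

/-- The segregated state ω_lm is stochastically stable (maximizes the potential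
over the four group-symmetric states) if and only if
C(N^A,2)·(2γ_A − 1) ≥ C(N^B,2)·(2γ_B − 1) and γ_B ≤ (N^A/(N^B − 1))·δ + 1/2. -/
theorem omega_lm_stochastically_stable_iff
    (NA NB : ℕ) (hNA : 2 ≤ NA) (hNB : 2 ≤ NB)
    (γA γB δ : ℝ) (hγA : γA ∈ Set.Ioo (1/2 : ℝ) 1) (hγB : γB ∈ Set.Ioo (1/2 : ℝ) 1)
    (hδ : 0 < δ) :
    (potLM NA NB γA γB δ ≥ potLL NA NB γA γB ∧
      potLM NA NB γA γB δ ≥ potML NA NB γA γB δ ∧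
      potLM NA NB γA γB δ ≥ potMM NA NB γA γB) ↔
    (C2 NA * (2 * γA - 1) ≥ C2 NB * (2 * γB - 1) ∧
      γB ≤ ((NA : ℝ) / ((NB : ℝ) - 1)) * δ + 1/2) :=
  omega_lm_stochastically_stable_iff_general NA NB hNB γA γB δ hγB
end

section
/- The segregated state ω_ml (all of Group A on platform ℓ, all of Group B on platform m) maximizes the potential over the four group-symmetric states {ω_ll, ω_lm, ω_ml, ω_mm} — i.e. is stochastically stable — if and only if C(N^A,2)·(2γ_A − 1) ≤ C(N^B,2)·(2γ_B − 1) and γ_A ≤ (N^B/(N^A − 1))·δ + 1/2. -/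
/-- The segregated state ω_ml is stochastically stable (maximizes the potential
over the four group-symmetric states) if and only if
C(N^A,2)·(2γ_A − 1) ≤ C(N^B,2)·(2γ_B − 1) and γ_A ≤ (N^B/(N^A − 1))·δ + 1/2. -/
theorem omega_ml_stochastically_stable_iff
    (NA NB : ℕ) (hNA : 2 ≤ NA) (hNB : 2 ≤ NB)
    (γA γB δ : ℝ) (hγA : γA ∈ Set.Ioo (1/2 : ℝ) 1) (hγB : γB ∈ Set.Ioo (1/2 : ℝ) 1)
    (hδ : 0 < δ) :
    (potML NA NB γA γB δ ≥ potLL NA NB γA γB ∧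
      potML NA NB γA γB δ ≥ potLM NA NB γA γB δ ∧
      potML NA NB γA γB δ ≥ potMM NA NB γA γB) ↔
    (C2 NA * (2 * γA - 1) ≤ C2 NB * (2 * γB - 1) ∧
      γA ≤ ((NB : ℝ) / ((NA : ℝ) - 1)) * δ + 1/2) := by
  obtain ⟨hA1, hA2⟩ := hγA
  obtain ⟨hB1, hB2⟩ := hγB
  have ha : (2:ℝ) ≤ (NA:ℝ) := by exact_mod_cast hNA
  have hb : (2:ℝ) ≤ (NB:ℝ) := by exact_mod_cast hNB
  have ha1 : (0:ℝ) < (NA:ℝ) - 1 := by linarith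
  set a := (NA:ℝ); set b := (NB:ℝ)
  have key : (b / (a - 1)) * δ * (a * (a - 1)) = a * b * δ := by
    field_simp
  simp only [potML, potLL, potLM, potMM, C2]
  constructor
  · rintro ⟨h1, h2, h3⟩
    constructor
    · linarith
    · have h1' : a * (a - 1) / 2 * (2 * γA - 1) ≤ a * b * δ := by linarith
      rw [← key] at h1'
      have h4 : a * (a - 1) * (γA - 1/2) ≤ (b / (a - 1)) * δ * (a * (a - 1)) := by
        linarith
      have := (mul_le_mul_iff_of_pos_right (by positivity : (0:ℝ) < a * (a - 1))).mp
        (by linarith : (γA - 1/2) * (a * (a - 1)) ≤ (b / (a - 1)) * δ * (a * (a - 1)))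
      linarith
  · rintro ⟨h1, h2⟩
    have h2' : (γA - 1/2) * (a * (a - 1)) ≤ (b / (a - 1)) * δ * (a * (a - 1)) := by
      have hpos : (0:ℝ) < a * (a - 1) := by nlinarith
      exact mul_le_mul_of_nonneg_right (by linarith) hpos.le
    rw [key] at h2'
    have hbpos : (0:ℝ) ≤ b * (b - 1) / 2 * (2 * γB - 1) :=
      mul_nonneg (by nlinarith) (by linarith)
    have habδ : (0:ℝ) ≤ a * b * δ := by positivity
    refine ⟨by nlinarith, by nlinarith, by nlinarith [hbpos, habδ]⟩
end
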